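/- Let r be an even natural number, and set Y⁺ = {f ∈ V : f(y, −x) = f(x,y)} and Y⁻ = {f ∈ V : f(y, −x) = −f(x,y)}. Then dim Y⁺ = r/2 + 1 if r ≡ 0 (mod 4) and dim Y⁺ = r/2 if r ≡ 2 (mod 4); and dim Y⁻ = r/2 if r ≡ 0 (mod 4) and dim Y⁻ = r/2 + 1 if r ≡ 2 (mod 4). -/

import Mathlib

open MvPolynomial

/-- The substitution `(ι* f)(x,y) = f(y, -x)` as a linear endomorphism of `ℝ[x,y]`. -/
noncomputable def iotaStar : MvPolynomial (Fin 2) ℝ →ₗ[ℝ] MvPolynomial (Fin 2) ℝ :=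
  (aeval ![X 1, -X 0]).toLinearMap

/-- The subspace `Y⁺ = {f ∈ V : f(y,-x) = f(x,y)}` of the space `V` of homogeneous
polynomials of degree `r`. -/
noncomputable def Yplus (r : ℕ) : Submodule ℝ (MvPolynomial (Fin 2) ℝ) :=
  MvPolynomial.homogeneousSubmodule (Fin 2) ℝ r ⊓
    LinearMap.ker (iotaStar - LinearMap.id)

/-- The subspace `Y⁻ = {f ∈ V : f(y,-x) = -f(x,y)}` of the space `V` of homogeneous
polynomials of degree `r`. -/
noncomputable def Yminus (r : ℕ) : Submodule ℝ (MvPolynomial (Fin 2) ℝ) :=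
  MvPolynomial.homogeneousSubmodule (Fin 2) ℝ r ⊓
    LinearMap.ker (iotaStar + LinearMap.id)

noncomputable def ddY (a b : ℕ) : Fin 2 →₀ ℕ := Finsupp.single 0 a + Finsupp.single 1 b

lemma ddY_apply0 (a b : ℕ) : ddY a b 0 = a := by simp [ddY, Finsupp.single_apply]
lemma ddY_apply1 (a b : ℕ) : ddY a b 1 = b := by simp [ddY, Finsupp.single_apply]

lemma ddY_inj {a b a' b' : ℕ} (h : ddY a b = ddY a' b') : a = a' ∧ b = b' := by
  constructor
  · have := congrArg (fun f => f 0) h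
    simpa [ddY_apply0] using this
  · have := congrArg (fun f => f 1) h
    simpa [ddY_apply1] using this

lemma finsupp_fin2_eq (u : Fin 2 →₀ ℕ) : u = ddY (u 0) (u 1) := by
  ext i
  fin_cases i
  · simp [ddY_apply0]
  · simp [ddY_apply1]

lemma ddY_degree (a b : ℕ) : (ddY a b).degree = a + b := by
  rw [Finsupp.degree_apply]
  rw [Finset.sum_subset (Finset.subset_univ _)]
  · rw [Fin.sum_univ_two, ddY_apply0, ddY_apply1]
  · intro x _ hx
    simpa using hx

noncomputable def mY (a b : ℕ) : MvPolynomial (Fin 2) ℝ := monomial (ddY a b) 1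

lemma mY_eq (a b : ℕ) : mY a b = X 0 ^ a * X 1 ^ b := by
  rw [mY, ddY, monomial_single_add, ← X_pow_eq_monomial]

lemma iota_mY (a b : ℕ) : iotaStar (mY a b) = ((-1 : ℝ)^b) • mY b a := by
  rw [mY_eq, mY_eq, iotaStar]
  simp only [AlgHom.toLinearMap_apply, map_mul, map_pow, aeval_X]
  rw [Matrix.cons_val_zero, Matrix.cons_val_one, Matrix.cons_val_zero, neg_pow]
  rw [smul_eq_C_mul, map_pow, map_neg, map_one]
  ring

lemma coeff_mY (i j a b : ℕ) : coeff (ddY i j) (mY a b) = if a = i ∧ b = j then 1 else 0 := by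
  rw [mY, coeff_monomial]
  by_cases h : ddY a b = ddY i j
  · obtain ⟨h1, h2⟩ := ddY_inj h
    simp [h, h1, h2]
  · rw [if_neg h, if_neg]
    rintro ⟨rfl, rfl⟩
    exact h rfl

lemma support_deg {r : ℕ} {f : MvPolynomial (Fin 2) ℝ} (hf : f.IsHomogeneous r)
    {u : Fin 2 →₀ ℕ} (hu : u ∈ f.support) : u = ddY (u 0) (r - u 0) ∧ u 0 ≤ r := by
  have hd : u.degree = r := by
    rw [Finsupp.degree_eq_weight_one]
    exact hf (mem_support_iff.mp hu)
  have h2 : u 0 + u 1 = r := by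
    rw [← hd]
    rw [Finsupp.degree_apply]
    rw [Finset.sum_subset (Finset.subset_univ _)]
    · rw [Fin.sum_univ_two]
    · intro x _ hx; simpa using hx
  refine ⟨?_, by omega⟩
  conv_lhs => rw [finsupp_fin2_eq u]
  congr 1
  omega

lemma expand {r : ℕ} {f : MvPolynomial (Fin 2) ℝ} (hf : f.IsHomogeneous r) :
    f = ∑ a ∈ Finset.range (r + 1), coeff (ddY a (r - a)) f • mY a (r - a) := by
  have hsm : ∀ a c, c • mY a (r - a) = monomial (ddY a (r-a)) c := by
    intro a c
    rw [mY, smul_monomial, smul_eq_mul, mul_one]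
  simp_rw [hsm]
  have hsub : f.support ⊆ Finset.image (fun a => ddY a (r - a)) (Finset.range (r + 1)) := by
    intro u hu
    obtain ⟨h1, h2⟩ := support_deg hf hu
    exact Finset.mem_image.mpr ⟨u 0, Finset.mem_range.mpr (by omega), h1.symm⟩
  have hinj : ∀ a ∈ Finset.range (r+1), ∀ b ∈ Finset.range (r+1),
      ddY a (r - a) = ddY b (r - b) → a = b := fun a _ b _ hab => (ddY_inj hab).1
  have h0 : ∀ u ∈ Finset.image (fun a => ddY a (r - a)) (Finset.range (r + 1)),
      u ∉ f.support → monomial u (coeff u f) = 0 := by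
    intro u _ hu
    rw [notMem_support_iff.mp hu, monomial_zero]
  calc f = ∑ u ∈ f.support, monomial u (coeff u f) := f.as_sum
    _ = ∑ u ∈ Finset.image (fun a => ddY a (r - a)) (Finset.range (r + 1)),
          monomial u (coeff u f) := Finset.sum_subset hsub h0
    _ = ∑ a ∈ Finset.range (r + 1), monomial (ddY a (r - a)) (coeff (ddY a (r - a)) f) :=
          Finset.sum_image hinj

lemma coeff_sum_mY {r : ℕ} (g : ℕ → ℝ) {b : ℕ} (hb : b ≤ r) :
    coeff (ddY b (r - b)) (∑ a ∈ Finset.range (r + 1), g a • mY a (r - a)) = g b := by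
  rw [MvPolynomial.coeff_sum]
  simp_rw [MvPolynomial.coeff_smul, coeff_mY, smul_eq_mul]
  rw [Finset.sum_eq_single b]
  · simp
  · intro a ha hab
    rw [if_neg, mul_zero]
    rintro ⟨rfl, -⟩; exact hab rfl
  · intro hb'
    exact absurd (Finset.mem_range.mpr (by omega)) hb'

lemma neg_one_pow_sub {r a : ℕ} (hr : Even r) (ha : a ≤ r) :
    (-1 : ℝ) ^ (r - a) = (-1) ^ a := by
  rcases Nat.even_or_odd a with he | ho
  · rw [he.neg_one_pow, (((Nat.even_sub ha).mpr (by simp [hr, he])).neg_one_pow)]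
  · rw [ho.neg_one_pow, ((Nat.Even.sub_odd ha hr ho).neg_one_pow)]

noncomputable def Ysub (ε : ℝ) (r : ℕ) : Submodule ℝ (MvPolynomial (Fin 2) ℝ) :=
  MvPolynomial.homogeneousSubmodule (Fin 2) ℝ r ⊓
    LinearMap.ker (iotaStar - ε • LinearMap.id)

lemma mem_Ysub {ε : ℝ} {r : ℕ} {f : MvPolynomial (Fin 2) ℝ} :
    f ∈ Ysub ε r ↔ f.IsHomogeneous r ∧ iotaStar f = ε • f := by
  simp [Ysub, LinearMap.mem_ker, sub_eq_zero, mem_homogeneousSubmodule]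

noncomputable def wY (ε : ℝ) (r a : ℕ) : MvPolynomial (Fin 2) ℝ :=
  mY a (r - a) + (ε * (-1) ^ a) • mY (r - a) a

lemma wY_mem {ε : ℝ} (hε : ε * ε = 1) {r a : ℕ} (hr : Even r) (ha : a ≤ r) :
    wY ε r a ∈ Ysub ε r := by
  rw [mem_Ysub]
  have h4a : ((-1 : ℝ) ^ a) * ((-1) ^ a) = 1 := by
    rw [← pow_add]; exact Even.neg_one_pow ⟨a, rfl⟩
  constructor
  · rw [wY, mY, mY, smul_monomial, smul_eq_mul, mul_one]
    exact (isHomogeneous_monomial _ (by rw [ddY_degree]; omega)).add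
      (isHomogeneous_monomial _ (by rw [ddY_degree]; omega))
  · rw [wY, map_add, map_smul, iota_mY, iota_mY]
    rw [smul_add, smul_smul, smul_smul]
    rw [neg_one_pow_sub hr ha]
    rw [show ε * (-1 : ℝ) ^ a * (-1) ^ a = ε from by linear_combination ε * h4a]
    rw [show ε * (ε * (-1 : ℝ) ^ a) = (-1) ^ a from by linear_combination ((-1 : ℝ) ^ a) * hε]
    rw [add_comm]

lemma coeff_rel {ε : ℝ} (hε : ε * ε = 1) {r : ℕ} (hr : Even r)
    {f : MvPolynomial (Fin 2) ℝ} (hf : f ∈ Ysub ε r) {b : ℕ} (hb : b ≤ r) :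
    coeff (ddY (r - b) b) f = ε * (-1) ^ b * coeff (ddY b (r - b)) f := by
  obtain ⟨hh, hi⟩ := mem_Ysub.mp hf
  have e1 : iotaStar f = ∑ a ∈ Finset.range (r + 1),
      (fun a' => coeff (ddY (r - a') a') f * (-1 : ℝ) ^ a') a • mY a (r - a) := by
    conv_lhs => rw [expand hh]
    rw [map_sum]
    rw [show (r + 1) = (r + 1) from rfl, ← Finset.sum_range_reflect
      (fun a => (fun a' => coeff (ddY (r - a') a') f * (-1 : ℝ) ^ a') a • mY a (r - a)) (r+1)]
    apply Finset.sum_congr rfl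
    intro a ha
    rw [Finset.mem_range] at ha
    have h1 : r + 1 - 1 - a = r - a := by omega
    have h2 : r - (r - a) = a := by omega
    simp only [h1, h2, map_smul, iota_mY, smul_smul]
  have e2 := coeff_sum_mY (fun a' => coeff (ddY (r - a') a') f * (-1 : ℝ) ^ a') hb
  rw [← e1, hi, coeff_smul, smul_eq_mul] at e2
  have h4 : ((-1 : ℝ) ^ b) * ((-1) ^ b) = 1 := by
    rw [← pow_add]
    exact Even.neg_one_pow ⟨b, rfl⟩
  linear_combination (-(-1 : ℝ) ^ b) * e2 - coeff (ddY (r - b) b) f * h4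

lemma coeff_wY {h i j : ℕ} (hi : i ≤ h) (hj : j ≤ h) (ε : ℝ) :
    coeff (ddY i (2*h - i)) (wY ε (2*h) j)
      = (if j = i then 1 else 0) + (if i = h ∧ j = h then ε * (-1)^h else 0) := by
  rw [wY, coeff_add, coeff_smul, coeff_mY, coeff_mY, smul_eq_mul]
  have e1 : (j = i ∧ 2*h - j = 2*h - i) ↔ j = i := by omega
  have e2 : (2*h - j = i ∧ j = 2*h - i) ↔ (i = h ∧ j = h) := by omega
  rw [if_congr e1 rfl rfl, if_congr e2 rfl rfl]
  congr 1
  split_ifs with hc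
  · rw [hc.2, mul_one]
  · rw [mul_zero]

lemma sum_split {M : Type*} [AddCommMonoid M] (h : ℕ) (F : ℕ → M) :
    ∑ a ∈ Finset.range (2*h+1), F a
      = (∑ a ∈ Finset.range h, (F a + F (2*h - a))) + F h := by
  induction h generalizing F with
  | zero => simp
  | succ n IH =>
    have h1 : 2*(n+1)+1 = (2*n+1)+1+1 := by ring
    rw [h1, Finset.sum_range_succ', Finset.sum_range_succ, IH (fun i => F (i+1))]
    conv_rhs => rw [Finset.sum_range_succ']
    have e : ∀ a ∈ Finset.range n,
        F (a+1) + F (2*(n+1) - (a+1)) = F (a+1) + F (2*n - a + 1) := by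
      intro a ha
      rw [Finset.mem_range] at ha
      have : 2*(n+1) - (a+1) = 2*n - a + 1 := by omega
      rw [this]
    rw [Finset.sum_congr rfl e]
    have e2 : 2*(n+1) - 0 = 2*n+1+1 := by omega
    rw [e2]
    abel

lemma hr2 (h : ℕ) : Even (2*h) := ⟨h, by ring⟩

lemma pair_eq {ε : ℝ} (hε : ε * ε = 1) {h : ℕ} {f : MvPolynomial (Fin 2) ℝ}
    (hf : f ∈ Ysub ε (2*h)) {a : ℕ} (ha : a ≤ h) :
    coeff (ddY a (2*h - a)) f • mY a (2*h - a)
      + coeff (ddY (2*h - a) (2*h - (2*h - a))) f • mY (2*h - a) (2*h - (2*h - a))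
      = coeff (ddY a (2*h - a)) f • wY ε (2*h) a := by
  have h2 : 2*h - (2*h - a) = a := by omega
  rw [h2, coeff_rel hε (hr2 h) hf (by omega : a ≤ 2*h)]
  rw [wY, smul_add, smul_smul]
  congr 2
  ring

/-- Case A: `ε * (-1)^h = 1`. -/
lemma masterA {ε : ℝ} (hε : ε * ε = 1) {h : ℕ} (hd : ε * (-1 : ℝ)^h = 1) :
    Module.finrank ℝ ↥(Ysub ε (2*h)) = h + 1 := by
  have hmem : ∀ i : Fin (h+1), wY ε (2*h) (i : ℕ) ∈ Ysub ε (2*h) :=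
    fun i => wY_mem hε (hr2 h) (by omega)
  set W : Fin (h+1) → ↥(Ysub ε (2*h)) := fun i => ⟨wY ε (2*h) (i : ℕ), hmem i⟩ with hW
  have amb : LinearIndependent ℝ (fun i : Fin (h+1) => wY ε (2*h) (i : ℕ)) := by
    rw [Fintype.linearIndependent_iff]
    intro g hg i
    have key : ∀ j : Fin (h+1), coeff (ddY (i : ℕ) (2*h - (i : ℕ))) (wY ε (2*h) (j : ℕ))
        = (if j = i then 1 else 0) + (if (i : ℕ) = h ∧ (j : ℕ) = h then 1 else 0) := by
      intro j
      rw [coeff_wY (Nat.lt_succ_iff.mp i.isLt) (Nat.lt_succ_iff.mp j.isLt), hd]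
      congr 1
      exact if_congr (by exact Fin.val_eq_val j i) rfl rfl
    have hc := congrArg (coeff (ddY (i : ℕ) (2*h - (i : ℕ)))) hg
    rw [MvPolynomial.coeff_sum] at hc
    simp only [coeff_smul, smul_eq_mul, key, coeff_zero] at hc
    simp only [mul_add, Finset.sum_add_distrib, mul_ite, mul_one, mul_zero,
      Finset.sum_ite_eq', Finset.mem_univ, if_true] at hc
    by_cases hih : (i : ℕ) = h
    · have hlast : ∀ j : Fin (h+1), ((i : ℕ) = h ∧ (j : ℕ) = h) ↔ j = i := by
        intro j
        rw [← Fin.val_eq_val j i, hih]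
        omega
      simp only [hlast, Finset.sum_ite_eq', Finset.mem_univ, if_true] at hc
      linarith
    · simp only [hih, false_and, if_false, Finset.sum_const_zero, add_zero] at hc
      exact hc
  have hli : LinearIndependent ℝ W :=
    LinearIndependent.of_comp (Ysub ε (2*h)).subtype amb
  have hsp : ⊤ ≤ Submodule.span ℝ (Set.range W) := by
    rintro ⟨f, hf⟩ -
    rw [Submodule.mem_span_range_iff_exists_fun]
    have hhom : f.IsHomogeneous (2*h) := (mem_Ysub.mp hf).1
    refine ⟨fun i => if (i : ℕ) = h then coeff (ddY h (2*h - h)) f / 2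
      else coeff (ddY (i : ℕ) (2*h - (i : ℕ))) f, ?_⟩
    apply Subtype.ext
    rw [AddSubmonoidClass.coe_finset_sum]
    simp only [SetLike.val_smul, hW]
    rw [Fin.sum_univ_eq_sum_range
      (fun a => (if a = h then coeff (ddY h (2*h - h)) f / 2
        else coeff (ddY a (2*h - a)) f) • wY ε (2*h) a) (h+1)]
    conv_rhs => rw [expand hhom]
    rw [sum_split h (fun a => coeff (ddY a (2*h - a)) f • mY a (2*h - a))]
    rw [Finset.sum_range_succ]
    congr 1
    · apply Finset.sum_congr rfl
      intro a ha
      rw [Finset.mem_range] at ha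
      rw [if_neg (by omega), pair_eq hε hf (by omega)]
    · rw [if_pos rfl, wY, hd, one_smul]
      have hs : 2*h - h = h := by omega
      rw [hs, smul_add, ← add_smul, add_halves]
  let B := Module.Basis.mk hli hsp
  rw [Module.finrank_eq_card_basis B, Fintype.card_fin]

/-- Case B: `ε * (-1)^h = -1`. -/
lemma masterB {ε : ℝ} (hε : ε * ε = 1) {h : ℕ} (hd : ε * (-1 : ℝ)^h = -1) :
    Module.finrank ℝ ↥(Ysub ε (2*h)) = h := by
  have hmem : ∀ i : Fin h, wY ε (2*h) (i : ℕ) ∈ Ysub ε (2*h) :=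
    fun i => wY_mem hε (hr2 h) (by omega)
  set W : Fin h → ↥(Ysub ε (2*h)) := fun i => ⟨wY ε (2*h) (i : ℕ), hmem i⟩ with hW
  have amb : LinearIndependent ℝ (fun i : Fin h => wY ε (2*h) (i : ℕ)) := by
    rw [Fintype.linearIndependent_iff]
    intro g hg i
    have key : ∀ j : Fin h, coeff (ddY (i : ℕ) (2*h - (i : ℕ))) (wY ε (2*h) (j : ℕ))
        = if j = i then 1 else 0 := by
      intro j
      rw [coeff_wY (le_of_lt i.isLt) (le_of_lt j.isLt)]
      rw [if_neg (show ¬((i : ℕ) = h ∧ (j : ℕ) = h) from by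
        have := i.isLt; omega), add_zero]
      exact if_congr (by exact Fin.val_eq_val j i) rfl rfl
    have hc := congrArg (coeff (ddY (i : ℕ) (2*h - (i : ℕ)))) hg
    rw [MvPolynomial.coeff_sum] at hc
    simp only [coeff_smul, smul_eq_mul, key, coeff_zero, mul_ite, mul_one, mul_zero,
      Finset.sum_ite_eq', Finset.mem_univ, if_true] at hc
    exact hc
  have hli : LinearIndependent ℝ W :=
    LinearIndependent.of_comp (Ysub ε (2*h)).subtype amb
  have hsp : ⊤ ≤ Submodule.span ℝ (Set.range W) := by
    rintro ⟨f, hf⟩ -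
    rw [Submodule.mem_span_range_iff_exists_fun]
    have hhom : f.IsHomogeneous (2*h) := (mem_Ysub.mp hf).1
    have hs : 2*h - h = h := by omega
    have hch : coeff (ddY h (2*h - h)) f = 0 := by
      rw [hs]
      have hrel := coeff_rel hε (hr2 h) hf (b := h) (by omega : h ≤ 2*h)
      rw [hd, hs] at hrel
      linarith
    refine ⟨fun i => coeff (ddY (i : ℕ) (2*h - (i : ℕ))) f, ?_⟩
    apply Subtype.ext
    rw [AddSubmonoidClass.coe_finset_sum]
    simp only [SetLike.val_smul, hW]
    rw [Fin.sum_univ_eq_sum_range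
      (fun a => coeff (ddY a (2*h - a)) f • wY ε (2*h) a) h]
    conv_rhs => rw [expand hhom]
    rw [sum_split h (fun a => coeff (ddY a (2*h - a)) f • mY a (2*h - a))]
    rw [hch, zero_smul, add_zero]
    apply Finset.sum_congr rfl
    intro a ha
    rw [Finset.mem_range] at ha
    rw [pair_eq hε hf (by omega)]
  let B := Module.Basis.mk hli hsp
  rw [Module.finrank_eq_card_basis B, Fintype.card_fin]


lemma Yplus_eq (r : ℕ) : Yplus r = Ysub 1 r := by
  unfold Yplus Ysub
  congr 1
  rw [one_smul]

lemma Yminus_eq (r : ℕ) : Yminus r = Ysub (-1) r := by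
  unfold Yminus Ysub
  congr 1
  congr 1
  ext f
  simp [sub_eq_add_neg]

/-- For even `r`: `dim Y⁺ = r/2 + 1` if `r ≡ 0 (mod 4)`, `dim Y⁺ = r/2` if
`r ≡ 2 (mod 4)`; `dim Y⁻ = r/2` if `r ≡ 0 (mod 4)`, `dim Y⁻ = r/2 + 1` if
`r ≡ 2 (mod 4)`. -/
theorem dim_Y (r : ℕ) (hr : Even r) :
    (r % 4 = 0 → Module.finrank ℝ ↥(Yplus r) = r / 2 + 1) ∧
    (r % 4 = 2 → Module.finrank ℝ ↥(Yplus r) = r / 2) ∧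
    (r % 4 = 0 → Module.finrank ℝ ↥(Yminus r) = r / 2) ∧
    (r % 4 = 2 → Module.finrank ℝ ↥(Yminus r) = r / 2 + 1) := by
  obtain ⟨h, hh⟩ := hr
  have hrh : r = 2 * h := by omega
  subst hrh
  have hdiv : 2 * h / 2 = h := by omega
  have hε1 : (1 : ℝ) * 1 = 1 := one_mul 1
  have hε2 : (-1 : ℝ) * (-1) = 1 := by norm_num
  refine ⟨?_, ?_, ?_, ?_⟩ <;> intro hmod
  · have heven : Even h := Nat.even_iff.mpr (by omega)
    rw [Yplus_eq, hdiv]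
    exact masterA hε1 (by rw [heven.neg_one_pow, one_mul])
  · have hodd : Odd h := Nat.odd_iff.mpr (by omega)
    rw [Yplus_eq, hdiv]
    exact masterB hε1 (by rw [hodd.neg_one_pow, one_mul])
  · have heven : Even h := Nat.even_iff.mpr (by omega)
    rw [Yminus_eq, hdiv]
    exact masterB hε2 (by rw [heven.neg_one_pow]; norm_num)
  · have hodd : Odd h := Nat.odd_iff.mpr (by omega)
    rw [Yminus_eq, hdiv]
    exact masterA hε2 (by rw [hodd.neg_one_pow]; norm_num)
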